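/- Let n ≥ 3 and write w = (w₁, w₂, w₃, w̃) ∈ ℂ³ × ℂ^{n−3}. Let σ₁(w) = Re(w₁w₂ + w₁·conj(w₃)), and suppose σ₁(w) < 0 and ‖w‖ < 1/10 (Euclidean norm). Set τ = conj(w₁) − conj(w₃), α = (w₁ − conj(w₂ − τ))/2, Σ = { ζ ∈ ℂ : |ζ − α|² ≤ |α|² − |w₁|² }, and φ_w(ζ) = ( ζ, |w₁|²/ζ + w₂ − conj(w₁), ζ − conj(τ), w̃ ). Then: (a) w₁ ≠ 0, Re(w₁(w₂ − τ)) + |w₁|² = σ₁(w) < 0, and Σ is a closed disc of positive radius containing w₁ in its interior and not containing 0; (b) φ_w(w₁) = w; (c) for every ζ ∈ Σ, σ₁(φ_w(ζ)) = |ζ − α|² − (|α|² − |w₁|²), so σ₁(φ_w(ζ)) ≤ 0 on Σ with equality exactly on the boundary circle; (d) ‖φ_w(ζ)‖ < 1 for every ζ on the boundary circle of Σ. -/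

import Mathlib

/-!
Completing the square, `σ₁(φ_w(ζ)) = |w₁|² + Re(ζ c) + |ζ|² = |ζ - α|² - (|α|² - |w₁|²)` for
`ζ ≠ 0`, with `c = w₂ - conj w₁ - τ` and `α = -conj c / 2`. Since `φ_w(w₁) = w`, evaluating at
`ζ = w₁` turns `σ₁(w) < 0` into `w₁` lying in the interior of `Σ`. On the boundary circle
`|ζ - α| ≤ |α|`, hence `|ζ| ≤ 2|α|` and `|w₁|² = |α|² - |ζ - α|² ≤ 2|α||ζ|`; as `|α| < 1/5`,
the three moved coordinates of `φ_w(ζ)` stay below `3/5`, and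
`‖φ_w(ζ)‖² < 1/100 + 4/25 + 2 · 9/25 < 1`.
-/

open Complex

noncomputable section

/-- `σ₁(w) = Re(w₁ w₂ + w₁ conj(w₃))` on `ℂ^n` (with `n = m + 3 ≥ 3`). -/
def sigma1 (m : ℕ) (w : EuclideanSpace ℂ (Fin (m + 3))) : ℝ :=
  (w 0 * w 1 + w 0 * (starRingEnd ℂ) (w 2)).re

open ComplexConjugate

theorem PiLp.norm_sq_le_add_sum_of_eq_off {ι : Type*} [Fintype ι] {β : ι → Type*}
    [∀ i, SeminormedAddCommGroup (β i)] {x y : PiLp 2 β} (s : Finset ι)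
    (h : ∀ i ∉ s, x i = y i) : ‖x‖ ^ 2 ≤ ‖y‖ ^ 2 + ∑ i ∈ s, ‖x i‖ ^ 2 := by
  classical
  rw [PiLp.norm_sq_eq_of_L2, PiLp.norm_sq_eq_of_L2, ← s.sum_add_sum_compl (fun i => ‖x i‖ ^ 2),
    add_comm]
  gcongr
  calc ∑ i ∈ sᶜ, ‖x i‖ ^ 2 = ∑ i ∈ sᶜ, ‖y i‖ ^ 2 :=
        Finset.sum_congr rfl fun i hi => by rw [h i (Finset.mem_compl.1 hi)]
    _ ≤ ∑ i, ‖y i‖ ^ 2 :=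
        Finset.sum_le_sum_of_subset_of_nonneg (Finset.subset_univ _) fun _ _ _ => sq_nonneg _

theorem norm_le_two_mul_of_norm_sub_le {E : Type*} [SeminormedAddCommGroup E] {a b : E}
    (h : ‖a - b‖ ≤ ‖b‖) : ‖a‖ ≤ 2 * ‖b‖ := by
  linarith [norm_sub_norm_le a b]

theorem norm_sq_sub_norm_sub_sq_le {E : Type*} [SeminormedAddCommGroup E] {a b : E}
    (h : ‖a - b‖ ≤ ‖b‖) : ‖b‖ ^ 2 - ‖a - b‖ ^ 2 ≤ 2 * ‖b‖ * ‖a‖ := by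
  have hb : ‖b‖ - ‖a - b‖ ≤ ‖a‖ := by
    simpa [norm_sub_rev b a] using norm_sub_norm_le b (b - a)
  nlinarith [norm_nonneg (a - b)]

theorem Complex.re_mul_add_norm_sq (ζ c : ℂ) :
    (ζ * c).re + ‖ζ‖ ^ 2 = ‖ζ + conj c / 2‖ ^ 2 - ‖c / 2‖ ^ 2 := by
  simp only [Complex.sq_norm, normSq_apply, mul_re, add_re, add_im, div_re, div_im, conj_re,
    conj_im]
  norm_num
  ring

theorem Fin.two_ne_zero_of_add_three (m : ℕ) : (2 : Fin (m + 3)) ≠ 0 :=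
  Fin.ne_of_val_ne (by decide : 2 ≠ 0)

theorem Fin.two_ne_one_of_add_three (m : ℕ) : (2 : Fin (m + 3)) ≠ 1 :=
  Fin.ne_of_val_ne (by decide : 2 ≠ 1)

section AttachedDisc

/- `discTranslation w`, `discCenter w` and `attachedDisc w` are the paper's `τ`, `α` and `φ_w`. -/

variable {m : ℕ} (w : EuclideanSpace ℂ (Fin (m + 3)))

def discTranslation : ℂ := conj (w 0) - conj (w 2)

def discCenter : ℂ := (w 0 - conj (w 1 - discTranslation w)) / 2

def attachedDisc (ζ : ℂ) : EuclideanSpace ℂ (Fin (m + 3)) :=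
  WithLp.toLp 2 fun i => if i = 0 then ζ
    else if i = 1 then ((‖w 0‖ ^ 2 : ℝ) : ℂ) / ζ + w 1 - conj (w 0)
    else if i = 2 then ζ - conj (discTranslation w)
    else w i

@[simp]
theorem attachedDisc_apply_zero (ζ : ℂ) : attachedDisc w ζ 0 = ζ := by
  simp [attachedDisc]

@[simp]
theorem attachedDisc_apply_one (ζ : ℂ) :
    attachedDisc w ζ 1 = ((‖w 0‖ ^ 2 : ℝ) : ℂ) / ζ + w 1 - conj (w 0) := by
  simp [attachedDisc]

@[simp]
theorem attachedDisc_apply_two (ζ : ℂ) : attachedDisc w ζ 2 = ζ - conj (discTranslation w) := by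
  simp [attachedDisc, Fin.two_ne_zero_of_add_three, Fin.two_ne_one_of_add_three]

theorem attachedDisc_apply_of_ne {ζ : ℂ} {i : Fin (m + 3)} (h0 : i ≠ 0) (h1 : i ≠ 1)
    (h2 : i ≠ 2) : attachedDisc w ζ i = w i := by
  simp [attachedDisc, h0, h1, h2]

theorem attachedDisc_self (h : w 0 ≠ 0) : attachedDisc w (w 0) = w := by
  ext i
  by_cases h0 : i = 0
  · simp [h0]
  by_cases h1 : i = 1
  · rw [h1, attachedDisc_apply_one, ofReal_pow, ← mul_conj', mul_div_cancel_left₀ _ h]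
    ring
  by_cases h2 : i = 2
  · simp [h2, discTranslation]
  exact attachedDisc_apply_of_ne w h0 h1 h2

theorem conj_div_two_eq_neg_discCenter :
    conj (w 1 - conj (w 0) - discTranslation w) / 2 = -discCenter w := by
  simp only [discCenter, discTranslation, map_sub, conj_conj]
  ring

theorem sigma1_attachedDisc {ζ : ℂ} (hζ : ζ ≠ 0) :
    sigma1 m (attachedDisc w ζ) = ‖ζ - discCenter w‖ ^ 2 - (‖discCenter w‖ ^ 2 - ‖w 0‖ ^ 2) := by
  set c := w 1 - conj (w 0) - discTranslation w
  have hσ : sigma1 m (attachedDisc w ζ) = ‖w 0‖ ^ 2 + ((ζ * c).re + ‖ζ‖ ^ 2) := by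
    have : ζ * attachedDisc w ζ 1 + ζ * conj (attachedDisc w ζ 2)
        = ((‖w 0‖ ^ 2 : ℝ) : ℂ) + ζ * c + ((‖ζ‖ ^ 2 : ℝ) : ℂ) := by
      simp only [attachedDisc_apply_one, attachedDisc_apply_two, map_sub, conj_conj, c,
        ofReal_pow, ← mul_conj']
      field_simp
      ring
    rw [sigma1, attachedDisc_apply_zero, this, add_re, add_re, ofReal_re, ofReal_re]
    ring
  have hc : ‖c / 2‖ = ‖discCenter w‖ := by
    rw [← RCLike.norm_conj, map_div₀, map_ofNat, conj_div_two_eq_neg_discCenter, norm_neg]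
  rw [hσ, re_mul_add_norm_sq, conj_div_two_eq_neg_discCenter, hc, ← sub_eq_add_neg]
  ring

theorem apply_zero_ne_zero_of_sigma1_neg (hw : sigma1 m w < 0) : w 0 ≠ 0 := by
  rintro h
  simp [sigma1, h] at hw

theorem re_mul_sub_discTranslation_add_norm_sq :
    (w 0 * (w 1 - discTranslation w)).re + ‖w 0‖ ^ 2 = sigma1 m w := by
  simp only [sigma1, discTranslation, Complex.sq_norm, normSq_apply, mul_re, add_re, sub_re,
    sub_im, conj_re, conj_im]
  ring

theorem norm_sub_discCenter_sq_lt (hw : sigma1 m w < 0) :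
    ‖w 0 - discCenter w‖ ^ 2 < ‖discCenter w‖ ^ 2 - ‖w 0‖ ^ 2 := by
  have h0 := apply_zero_ne_zero_of_sigma1_neg w hw
  have h := sigma1_attachedDisc w h0
  rw [attachedDisc_self w h0] at h
  linarith

theorem norm_discCenter_le : ‖discCenter w‖ ≤ ‖w 0‖ + (‖w 1‖ + ‖w 2‖) / 2 := by
  have : discCenter w = w 0 - (conj (w 1) + w 2) / 2 := by
    simp only [discCenter, discTranslation, map_sub, conj_conj]
    ring
  rw [this]
  refine (norm_sub_le _ _).trans ?_
  rw [norm_div, RCLike.norm_two]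
  gcongr
  exact (norm_add_le _ _).trans_eq (by rw [RCLike.norm_conj])

theorem norm_attachedDisc_lt_one (hwn : ‖w‖ < 1 / 10) {ζ : ℂ}
    (hζ : ‖ζ - discCenter w‖ ^ 2 = ‖discCenter w‖ ^ 2 - ‖w 0‖ ^ 2) :
    ‖attachedDisc w ζ‖ < 1 := by
  set α := discCenter w
  have hw : ∀ i, ‖w i‖ < 1 / 10 := fun i => (PiLp.norm_apply_le w i).trans_lt hwn
  have hα : ‖α‖ < 1 / 5 := by linarith [norm_discCenter_le w, hw 0, hw 1, hw 2]
  have hζα : ‖ζ - α‖ ≤ ‖α‖ := by nlinarith [norm_nonneg (ζ - α), norm_nonneg α]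
  have hζ_norm : ‖ζ‖ < 2 / 5 := by linarith [norm_le_two_mul_of_norm_sub_le hζα]
  have hinv : ‖((‖w 0‖ ^ 2 : ℝ) : ℂ) / ζ‖ ≤ 2 * ‖α‖ := by
    rw [norm_div, norm_real, Real.norm_of_nonneg (sq_nonneg _)]
    refine div_le_of_le_mul₀ (norm_nonneg _) (by positivity) ?_
    linarith [norm_sq_sub_norm_sub_sq_le hζα]
  have hφ₁ : ‖attachedDisc w ζ 1‖ < 3 / 5 := by
    rw [attachedDisc_apply_one]
    refine ((norm_sub_le _ _).trans (add_le_add_left (norm_add_le _ _) _)).trans_lt ?_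
    rw [RCLike.norm_conj]
    linarith [hw 0, hw 1]
  have hφ₂ : ‖attachedDisc w ζ 2‖ < 3 / 5 := by
    rw [attachedDisc_apply_two]
    refine (norm_sub_le _ _).trans_lt ?_
    rw [RCLike.norm_conj, discTranslation]
    linarith [hw 0, hw 2, norm_sub_le (conj (w 0)) (conj (w 2)), RCLike.norm_conj (w 0),
      RCLike.norm_conj (w 2)]
  have hsq : ‖attachedDisc w ζ‖ ^ 2 ≤
      ‖w‖ ^ 2 + (‖ζ‖ ^ 2 + (‖attachedDisc w ζ 1‖ ^ 2 + ‖attachedDisc w ζ 2‖ ^ 2)) := by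
    have h := PiLp.norm_sq_le_add_sum_of_eq_off ({0, 1, 2} : Finset (Fin (m + 3)))
      (x := attachedDisc w ζ) (y := w) fun i hi => by
        simp only [Finset.mem_insert, Finset.mem_singleton, not_or] at hi
        exact attachedDisc_apply_of_ne w hi.1 hi.2.1 hi.2.2
    rwa [Finset.sum_insert (by simp [(Fin.two_ne_zero_of_add_three m).symm]),
      Finset.sum_pair (Fin.two_ne_one_of_add_three m).symm, attachedDisc_apply_zero] at h
  refine (sq_lt_one_iff₀ (norm_nonneg _)).1 ?_
  calc ‖attachedDisc w ζ‖ ^ 2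
      ≤ ‖w‖ ^ 2 + (‖ζ‖ ^ 2 + (‖attachedDisc w ζ 1‖ ^ 2 + ‖attachedDisc w ζ 2‖ ^ 2)) := hsq
    _ < (1 / 10) ^ 2 + ((2 / 5) ^ 2 + ((3 / 5) ^ 2 + (3 / 5) ^ 2)) := by gcongr
    _ < 1 := by norm_num

end AttachedDisc

/-- The translated analytic disc attached to `N₁ \ {z₁ = 0}` through a
point `w` with `σ₁(w) < 0`, `‖w‖ < 1/10`: well-definedness, `φ_w(w₁) = w`, the formula for
`σ₁ ∘ φ_w`, and the boundary bound `‖φ_w(ζ)‖ < 1`. -/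
theorem analytic_disc_attached_to_N1 (m : ℕ) (w : EuclideanSpace ℂ (Fin (m + 3)))
    (hw : sigma1 m w < 0) (hwn : ‖w‖ < 1 / 10) :
    let τ : ℂ := (starRingEnd ℂ) (w 0) - (starRingEnd ℂ) (w 2)
    let α : ℂ := (w 0 - (starRingEnd ℂ) (w 1 - τ)) / 2
    let S : Set ℂ := {ζ : ℂ | ‖ζ - α‖ ^ 2 ≤ ‖α‖ ^ 2 - ‖w 0‖ ^ 2}
    let φ : ℂ → EuclideanSpace ℂ (Fin (m + 3)) := fun ζ =>
      WithLp.toLp 2 (fun i => if i = 0 then ζ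
        else if i = 1 then ((‖w 0‖ ^ 2 : ℝ) : ℂ) / ζ + w 1 - (starRingEnd ℂ) (w 0)
        else if i = 2 then ζ - (starRingEnd ℂ) τ
        else w i)
    -- (a)
    (w 0 ≠ 0) ∧ ((w 0 * (w 1 - τ)).re + ‖w 0‖ ^ 2 = sigma1 m w) ∧
    (‖w 0 - α‖ ^ 2 < ‖α‖ ^ 2 - ‖w 0‖ ^ 2) ∧ ((0 : ℂ) ∉ S) ∧
    -- (b)
    (φ (w 0) = w) ∧
    -- (c)
    (∀ ζ ∈ S, sigma1 m (φ ζ) = ‖ζ - α‖ ^ 2 - (‖α‖ ^ 2 - ‖w 0‖ ^ 2)) ∧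
    -- (d)
    (∀ ζ : ℂ, ‖ζ - α‖ ^ 2 = ‖α‖ ^ 2 - ‖w 0‖ ^ 2 → ‖φ ζ‖ < 1) := by
  intro τ α S φ
  have hw0 : w 0 ≠ 0 := apply_zero_ne_zero_of_sigma1_neg w hw
  have h0S : (0 : ℂ) ∉ S := fun h => hw0 (by simpa [S] using h)
  exact ⟨hw0, re_mul_sub_discTranslation_add_norm_sq w, norm_sub_discCenter_sq_lt w hw, h0S,
    attachedDisc_self w hw0, fun ζ hζ => sigma1_attachedDisc w (ne_of_mem_of_not_mem hζ h0S),
    fun _ hζ => norm_attachedDisc_lt_one w hwn hζ⟩
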